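/- Let (X_1, …, X_n) be a centered Gaussian random vector such that E[X_i X_j] ≥ 0 for all i ≠ j, and let m_1, …, m_n be positive integers. Then E[∏_{j=1}^{n} X_j^{2m_j}] ≥ ∏_{j=1}^{n} E[X_j^{2m_j}]. -/

import Mathlib

/-!
For `t : Fin n → ℝ` the variable `∑ i, t i * X i` is centered Gaussian with variance
`q t = ∑ i j, t i * t j * E[X i * X j]`, so with `M = ∑ j, m j` its `2M`-th moment is
`(2M - 1)‼ * q t ^ M`. Both sides are polynomials in `t`; the coefficient of
`∏ j, t j ^ (2 * m j)` is `multinomial (2 • m) * E[∏ j, X j ^ (2 * m j)]` on the left and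
`(2M - 1)‼` times that coefficient of `q ^ M` on the right. All coefficients of `q` are
nonnegative, so the latter is at least the one of `(∑ j, E[X j ^ 2] * t j ^ 2) ^ M`, which is
`multinomial m * ∏ j, E[X j ^ 2] ^ m j`. Inserting the one-dimensional moments
`E[X j ^ (2 * m j)] = (2 * m j - 1)‼ * E[X j ^ 2] ^ m j` and an identity between factorials
gives the claim.
-/

open MeasureTheory ProbabilityTheory Finset
open scoped NNReal

/-- A centered (jointly) Gaussian random vector: every real-linear combination of the
components is a centered Gaussian random variable, and each component is non-degenerate. -/
def IsCenteredGaussianVec {Ω : Type*} [MeasureSpace Ω] {n : ℕ}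
    (X : Fin n → Ω → ℝ) : Prop :=
  (∀ i, Measurable (X i)) ∧
  (∀ a : Fin n → ℝ, ∃ v : ℝ≥0,
      Measure.map (fun ω => ∑ i, a i * X i ω) ℙ = gaussianReal 0 v) ∧
  (∀ i, ∃ v : ℝ≥0, 0 < v ∧ Measure.map (X i) ℙ = gaussianReal 0 v)

section GaussianMoments

open Real Nat

-- `(2k - 1)‼`, written without truncated subtraction.
noncomputable def gaussianEvenMoment (k : ℕ) : ℝ := (2 * k)! / (2 ^ k * k !)

lemma gaussianEvenMoment_nonneg (k : ℕ) : 0 ≤ gaussianEvenMoment k := by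
  unfold gaussianEvenMoment; positivity

lemma Nat.cast_multinomial_eq_div {ι : Type*} (s : Finset ι) (m : ι → ℕ) :
    (multinomial s m : ℝ) = (∑ i ∈ s, m i)! / ∏ i ∈ s, ((m i)! : ℝ) := by
  rw [eq_div_iff (prod_ne_zero_iff.2 fun i _ => by positivity), mul_comm]
  exact_mod_cast multinomial_spec s m

lemma multinomial_two_mul_mul_prod_gaussianEvenMoment {ι : Type*} (s : Finset ι)
    (m : ι → ℕ) :
    (multinomial s (fun i => 2 * m i) : ℝ) * ∏ i ∈ s, gaussianEvenMoment (m i) =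
      gaussianEvenMoment (∑ i ∈ s, m i) * multinomial s m := by
  simp only [Nat.cast_multinomial_eq_div, gaussianEvenMoment, prod_div_distrib, prod_mul_distrib,
    prod_pow_eq_pow_sum, ← mul_sum]
  have : ∏ i ∈ s, ((m i)! : ℝ) ≠ 0 := prod_ne_zero_iff.2 fun i _ => by positivity
  have : ∏ i ∈ s, ((2 * m i)! : ℝ) ≠ 0 := prod_ne_zero_iff.2 fun i _ => by positivity
  field_simp

lemma integral_pow_gaussianReal_eq_sqrt_pow_mul (v : ℝ≥0) (k : ℕ) :
    ∫ x, x ^ k ∂gaussianReal 0 v = √v ^ k * ∫ x, x ^ k ∂gaussianReal 0 1 := by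
  have hmap := gaussianReal_map_const_mul (μ := 0) (v := 1) √v
  have hv : (NNReal.mk (√v ^ 2) (sq_nonneg _) * 1 : ℝ≥0) = v := by ext; simp
  rw [hv, mul_zero] at hmap
  rw [← hmap, integral_map (by fun_prop) (by fun_prop)]
  simp_rw [mul_pow]
  exact integral_const_mul _ _

lemma integrable_gaussianPDFReal_mul_pow (μ : ℝ) {v : ℝ≥0} (hv : v ≠ 0) (j : ℕ) :
    Integrable (fun x : ℝ => gaussianPDFReal μ v x * x ^ j) := by
  have h : Integrable (fun x : ℝ => x ^ j) (gaussianReal μ v) :=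
    (memLp_id_gaussianReal j).integrable_norm_pow'.mono' (by fun_prop) (by simp)
  rw [gaussianReal_of_var_ne_zero _ hv,
    integrable_withDensity_iff_integrable_smul' (measurable_gaussianPDF μ v)
      (ae_of_all _ fun _ => gaussianPDF_lt_top)] at h
  simpa using h

lemma hasDerivAt_gaussianPDFReal_zero_one (x : ℝ) :
    HasDerivAt (gaussianPDFReal 0 1) (-(x * gaussianPDFReal 0 1 x)) x := by
  have h : HasDerivAt (fun y : ℝ => -y ^ 2 / 2) (-x) x :=
    ((hasDerivAt_pow 2 x).neg.div_const 2).congr_deriv (by ring)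
  simp only [gaussianPDFReal_def, NNReal.coe_one, mul_one, sub_zero]
  exact (h.exp.const_mul _).congr_deriv (by ring)

lemma integral_pow_add_two_gaussianReal_zero_one (k : ℕ) :
    ∫ x, x ^ (k + 2) ∂gaussianReal 0 1 = (k + 1) * ∫ x, x ^ k ∂gaussianReal 0 1 := by
  have hint := integrable_gaussianPDFReal_mul_pow 0 one_ne_zero
  -- Gaussian integration by parts: the density `φ` satisfies `φ' x = -x * φ x`.
  have hparts := integral_mul_deriv_eq_deriv_mul_of_integrable
    (u := fun x : ℝ => x ^ (k + 1)) (v := fun x => -gaussianPDFReal 0 1 x)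
    (u' := fun x => (k + 1) * x ^ k) (v' := fun x => x * gaussianPDFReal 0 1 x)
    (fun x _ => by simpa using hasDerivAt_pow (k + 1) x)
    (fun x _ => (hasDerivAt_gaussianPDFReal_zero_one x).neg.congr_deriv (neg_neg _))
    ((hint (k + 2)).congr (ae_of_all _ fun x => by simp only [Pi.mul_apply]; ring))
    (((hint k).const_mul (k + 1)).neg.congr
      (ae_of_all _ fun x => by simp only [Pi.mul_apply, Pi.neg_apply]; ring))
    ((hint (k + 1)).neg.congr
      (ae_of_all _ fun x => by simp only [Pi.mul_apply, Pi.neg_apply]; ring))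
  simp only [mul_neg, integral_neg, neg_neg] at hparts
  simp only [integral_gaussianReal_eq_integral_smul one_ne_zero, smul_eq_mul,
    ← integral_const_mul]
  refine (integral_congr_ae (ae_of_all _ fun x => ?_)).trans (hparts.trans
    (integral_congr_ae (ae_of_all _ fun x => ?_))) <;> ring

lemma integral_pow_two_mul_gaussianReal (v : ℝ≥0) (k : ℕ) :
    ∫ x, x ^ (2 * k) ∂gaussianReal 0 v = v ^ k * gaussianEvenMoment k := by
  rw [integral_pow_gaussianReal_eq_sqrt_pow_mul, pow_mul, sq_sqrt v.coe_nonneg]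
  congr 1
  induction k with
  | zero => simp [gaussianEvenMoment]
  | succ k ih =>
    rw [mul_add_one, integral_pow_add_two_gaussianReal_zero_one, ih, gaussianEvenMoment,
      gaussianEvenMoment, mul_add_one, factorial_succ, factorial_succ, factorial_succ]
    push_cast
    field_simp
    ring

lemma ProbabilityTheory.HasLaw.integral_pow_two_mul_gaussianReal {Ω : Type*} [MeasurableSpace Ω]
    {μ : Measure Ω} {Y : Ω → ℝ} {v : ℝ≥0} (hY : HasLaw Y (gaussianReal 0 v) μ)
    (k : ℕ) :
    ∫ ω, Y ω ^ (2 * k) ∂μ = (∫ ω, Y ω ^ 2 ∂μ) ^ k * gaussianEvenMoment k := by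
  have h : ∀ j, ∫ ω, Y ω ^ (2 * j) ∂μ = v ^ j * gaussianEvenMoment j := fun j =>
    (hY.integral_comp (f := fun x => x ^ (2 * j)) (by fun_prop)).trans
      (_root_.integral_pow_two_mul_gaussianReal v j)
  have hvar := h 1
  norm_num [gaussianEvenMoment] at hvar
  rw [h, hvar]

end GaussianMoments

namespace MvPolynomial

variable {σ R : Type*} [CommSemiring R] [PartialOrder R] [IsOrderedRing R]

variable (σ R) in
def nonnegCoeffs : Subsemiring (MvPolynomial σ R) where
  carrier := {p | ∀ d, 0 ≤ coeff d p}
  mul_mem' hp hq d := by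
    classical
    rw [coeff_mul]
    exact sum_nonneg fun x _ => mul_nonneg (hp _) (hq _)
  one_mem' d := by
    classical
    rw [coeff_one]
    split_ifs <;> simp
  add_mem' hp hq d := by
    rw [coeff_add]
    exact add_nonneg (hp d) (hq d)
  zero_mem' d := by simp

lemma C_mem_nonnegCoeffs {a : R} (ha : 0 ≤ a) : C a ∈ nonnegCoeffs σ R := fun d => by
  classical
  rw [coeff_C]
  split_ifs <;> simp [ha]

lemma X_mem_nonnegCoeffs (i : σ) : X i ∈ nonnegCoeffs σ R := fun d => by
  classical
  rw [coeff_X]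
  split_ifs <;> simp

lemma coeff_pow_le_coeff_add_pow {p q : MvPolynomial σ R} (hp : p ∈ nonnegCoeffs σ R)
    (hq : q ∈ nonnegCoeffs σ R) (M : ℕ) (d : σ →₀ ℕ) :
    coeff d (p ^ M) ≤ coeff d ((p + q) ^ M) := by
  rw [add_pow, coeff_sum]
  refine le_of_eq_of_le (by simp) (single_le_sum (fun k _ => ?_) (self_mem_range_succ M))
  exact (mul_mem (mul_mem (pow_mem hp k) (pow_mem hq _)) (natCast_mem _ _)) d

lemma multinomial_mul_coeff_prod_pow_le_coeff_sum_pow {ι : Type*} [DecidableEq ι]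
    {s : Finset ι} {f : ι → MvPolynomial σ R} (hf : ∀ i ∈ s, f i ∈ nonnegCoeffs σ R)
    {M : ℕ} {u : ι → ℕ} (hu : u ∈ piAntidiag s M) (d : σ →₀ ℕ) :
    Nat.multinomial s u * coeff d (∏ i ∈ s, f i ^ u i) ≤
      coeff d ((∑ i ∈ s, f i) ^ M) := by
  rw [sum_pow_eq_sum_piAntidiag, coeff_sum]
  refine le_of_eq_of_le ?_ (single_le_sum (fun v _ => ?_) hu)
  · rw [← C_eq_coe_nat, coeff_C_mul]
  · exact (mul_mem (natCast_mem _ _) (prod_mem fun i hi => pow_mem (hf i hi) _)) d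

end MvPolynomial

lemma integrable_prod_pow_of_memLp {Ω ι : Type*} [MeasurableSpace Ω] [Fintype ι]
    {μ : Measure Ω} [IsFiniteMeasure μ] {f : ι → Ω → ℝ} (e : ι → ℕ)
    (hf : ∀ i, MemLp (f i) (∑ j, e j : ℕ) μ) :
    Integrable (fun ω => ∏ i, f i ω ^ e i) μ := by
  have hsum : MemLp (fun ω => ∑ i, |f i ω|) (∑ j, e j : ℕ) μ :=
    memLp_finsetSum _ fun i _ => (hf i).abs
  refine hsum.integrable_norm_pow'.mono'
    (Finset.aestronglyMeasurable_fun_prod _ fun i _ => (hf i).1.pow _) (ae_of_all _ fun ω => ?_)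
  have hle : ∀ i, |f i ω| ≤ ∑ j, |f j ω| := fun i =>
    single_le_sum (fun j _ => abs_nonneg (f j ω)) (mem_univ i)
  calc ‖∏ i, f i ω ^ e i‖ = ∏ i, |f i ω| ^ e i := by simp
    _ ≤ ∏ i, (∑ j, |f j ω|) ^ e i :=
        prod_le_prod (fun i _ => by positivity) fun i _ =>
          pow_le_pow_left₀ (abs_nonneg _) (hle i) _
    _ = ‖∑ j, |f j ω|‖ ^ ∑ j, e j := by
        rw [prod_pow_eq_pow_sum, Real.norm_of_nonneg (sum_nonneg fun j _ => abs_nonneg _)]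

noncomputable section MomentPolynomials

open MvPolynomial (C coeff eval)

variable {Ω ι : Type*} [MeasurableSpace Ω] [Fintype ι] (μ : Measure Ω) (X : ι → Ω → ℝ)

def momentPoly [DecidableEq ι] (k : ℕ) : MvPolynomial ι ℝ :=
  ∑ e ∈ piAntidiag univ k,
    C (Nat.multinomial univ e * ∫ ω, ∏ i, X i ω ^ e i ∂μ) * ∏ i, MvPolynomial.X i ^ e i

def covPoly : MvPolynomial ι ℝ :=
  ∑ i, ∑ j, C (∫ ω, X i ω * X j ω ∂μ) * MvPolynomial.X i * MvPolynomial.X j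

def IsCenteredGaussianFamily : Prop :=
  ∀ t : ι → ℝ, ∃ v, HasLaw (fun ω => ∑ i, t i * X i ω) (gaussianReal 0 v) μ

variable {μ X}

lemma eval_momentPoly [DecidableEq ι]
    (hX : ∀ e : ι → ℕ, Integrable (fun ω => ∏ i, X i ω ^ e i) μ) (k : ℕ)
    (t : ι → ℝ) :
    eval t (momentPoly μ X k) = ∫ ω, (∑ i, t i * X i ω) ^ k ∂μ := by
  simp_rw [sum_pow_eq_sum_piAntidiag, mul_pow, prod_mul_distrib]
  rw [integral_finsetSum _ fun e _ => ((hX e).const_mul _).const_mul _]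
  simp only [momentPoly, map_sum, map_mul, map_prod, map_pow, MvPolynomial.eval_C,
    MvPolynomial.eval_X, integral_const_mul]
  exact sum_congr rfl fun e _ => by ring

lemma coeff_momentPoly [DecidableEq ι] {k : ℕ} {e : ι → ℕ} (he : ∑ i, e i = k) :
    coeff (Finsupp.equivFunOnFinite.symm e) (momentPoly μ X k) =
      Nat.multinomial univ e * ∫ ω, ∏ i, X i ω ^ e i ∂μ := by
  have hexp : ∀ e' : ι → ℕ,
      Finsupp.equivFunOnFinite.symm e = Finsupp.indicator univ (fun i _ => e' i) ↔ e = e' := by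
    simp [Finsupp.ext_iff, funext_iff]
  simp only [momentPoly, MvPolynomial.coeff_sum, MvPolynomial.coeff_C_mul,
    MvPolynomial.coeff_prod_X_pow, hexp, mul_ite, mul_one, mul_zero]
  rw [sum_ite_eq]
  simp [mem_piAntidiag, he]

lemma eval_covPoly (hX : ∀ i, MemLp (X i) 2 μ) (t : ι → ℝ) :
    eval t (covPoly μ X) = ∫ ω, (∑ i, t i * X i ω) ^ 2 ∂μ := by
  have hint : ∀ i j, Integrable (fun ω => t i * t j * (X i ω * X j ω)) μ := fun i j =>
    ((hX i).integrable_mul (hX j)).const_mul _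
  have hsq : ∀ ω, (∑ i, t i * X i ω) ^ 2 = ∑ i, ∑ j, t i * t j * (X i ω * X j ω) := by
    intro ω
    rw [sq, sum_mul_sum]
    exact sum_congr rfl fun i _ => sum_congr rfl fun j _ => by ring
  simp_rw [hsq]
  rw [integral_finsetSum _ fun i _ => integrable_finsetSum _ fun j _ => hint i j]
  simp_rw [integral_finsetSum _ fun j _ => hint _ j, integral_const_mul]
  simp only [covPoly, map_sum, map_mul, MvPolynomial.eval_C, MvPolynomial.eval_X]
  exact sum_congr rfl fun i _ => sum_congr rfl fun j _ => by ring

lemma IsCenteredGaussianFamily.exists_hasLaw_apply [DecidableEq ι]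
    (hX : IsCenteredGaussianFamily μ X) (i : ι) : ∃ v, HasLaw (X i) (gaussianReal 0 v) μ := by
  obtain ⟨v, hv⟩ := hX (Pi.single i 1)
  exact ⟨v, by simpa [Pi.single_apply] using hv⟩

lemma IsCenteredGaussianFamily.momentPoly_two_mul_eq [DecidableEq ι] [IsFiniteMeasure μ]
    (hX : IsCenteredGaussianFamily μ X) (M : ℕ) :
    momentPoly μ X (2 * M) = C (gaussianEvenMoment M) * covPoly μ X ^ M := by
  have hmemLp : ∀ i (p : ℝ≥0), MemLp (X i) p μ := fun i p =>
    (hX.exists_hasLaw_apply i).choose_spec.hasGaussianLaw.memLp ENNReal.coe_ne_top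
  refine MvPolynomial.funext fun t => ?_
  obtain ⟨v, hv⟩ := hX t
  rw [eval_momentPoly (fun e => integrable_prod_pow_of_memLp e fun i => hmemLp i _),
    hv.integral_pow_two_mul_gaussianReal, map_mul, map_pow, MvPolynomial.eval_C,
    eval_covPoly fun i => hmemLp i 2, mul_comm]

lemma multinomial_mul_prod_le_coeff_covPoly_pow [DecidableEq ι]
    (hcov : ∀ i j, i ≠ j → 0 ≤ ∫ ω, X i ω * X j ω ∂μ) (m : ι → ℕ) :
    Nat.multinomial univ m * ∏ i, (∫ ω, X i ω * X i ω ∂μ) ^ m i ≤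
      coeff (Finsupp.equivFunOnFinite.symm fun i => 2 * m i) (covPoly μ X ^ ∑ i, m i) := by
  set c : ι → ι → ℝ := fun i j => ∫ ω, X i ω * X j ω ∂μ
  set q : ι → ι → MvPolynomial ι ℝ := fun i j =>
    C (c i j) * MvPolynomial.X i * MvPolynomial.X j
  have hq : ∀ i j, 0 ≤ c i j → q i j ∈ MvPolynomial.nonnegCoeffs ι ℝ := fun i j h =>
    mul_mem (mul_mem (MvPolynomial.C_mem_nonnegCoeffs h) (MvPolynomial.X_mem_nonnegCoeffs i))
      (MvPolynomial.X_mem_nonnegCoeffs j)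
  have hdiag : ∀ i, 0 ≤ c i i := fun i => integral_nonneg fun ω => mul_self_nonneg _
  have hsplit : covPoly μ X = ∑ i, q i i + ∑ i, ∑ j ∈ univ.erase i, q i j := by
    rw [covPoly, ← sum_add_distrib]
    exact sum_congr rfl fun i _ => (add_sum_erase _ _ (mem_univ i)).symm
  have hmonomial :
      ∏ i, q i i ^ m i = C (∏ i, c i i ^ m i) * ∏ i, MvPolynomial.X i ^ (2 * m i) := by
    simp only [q, mul_assoc, ← sq, mul_pow, prod_mul_distrib, ← pow_mul, map_prod, map_pow]
  calc Nat.multinomial univ m * ∏ i, c i i ^ m i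
      = Nat.multinomial univ m *
          coeff (Finsupp.equivFunOnFinite.symm fun i => 2 * m i) (∏ i, q i i ^ m i) := by
        rw [hmonomial, MvPolynomial.coeff_C_mul, MvPolynomial.coeff_prod_X_pow, if_pos, mul_one]
        ext i; simp
    _ ≤ _ := MvPolynomial.multinomial_mul_coeff_prod_pow_le_coeff_sum_pow
        (fun i _ => hq i i (hdiag i)) (mem_piAntidiag.2 ⟨rfl, fun i _ => mem_univ i⟩) _
    _ ≤ _ := by
        rw [hsplit]
        exact MvPolynomial.coeff_pow_le_coeff_add_pow (sum_mem fun i _ => hq i i (hdiag i))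
          (sum_mem fun i _ => sum_mem fun j hj => hq i j (hcov i j (ne_of_mem_erase hj).symm)) _ _

end MomentPolynomials

theorem stmt_3_general {Ω : Type*} [MeasureSpace Ω] [IsProbabilityMeasure (ℙ : Measure Ω)]
    {n : ℕ} (X : Fin n → Ω → ℝ) (hX : IsCenteredGaussianVec X)
    (hcov : ∀ i j, i ≠ j → 0 ≤ ∫ ω, X i ω * X j ω ∂ℙ)
    (m : Fin n → ℕ) :
    (∏ j, ∫ ω, X j ω ^ (2 * m j) ∂ℙ) ≤ ∫ ω, ∏ j, X j ω ^ (2 * m j) ∂ℙ := by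
  obtain ⟨hmeas, hlin, -⟩ := hX
  have hgauss : IsCenteredGaussianFamily ℙ X := fun t =>
    (hlin t).imp fun v hv => ⟨by fun_prop, hv⟩
  have hmoment : ∀ j, ∫ ω, X j ω ^ (2 * m j) ∂ℙ =
      (∫ ω, X j ω * X j ω ∂ℙ) ^ m j * gaussianEvenMoment (m j) := fun j => by
    obtain ⟨v, hv⟩ := hgauss.exists_hasLaw_apply j
    simp_rw [hv.integral_pow_two_mul_gaussianReal, sq]
  have hcoeff := coeff_momentPoly (μ := ℙ) (X := X) (e := fun j => 2 * m j) (mul_sum ..).symm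
  rw [hgauss.momentPoly_two_mul_eq, MvPolynomial.coeff_C_mul] at hcoeff
  refine le_of_mul_le_mul_left ?_ (Nat.cast_pos.2 (Nat.multinomial_pos univ fun j => 2 * m j))
  calc (Nat.multinomial univ fun j => 2 * m j : ℝ) * ∏ j, ∫ ω, X j ω ^ (2 * m j) ∂ℙ
      = gaussianEvenMoment (∑ j, m j) *
          (Nat.multinomial univ m * ∏ j, (∫ ω, X j ω * X j ω ∂ℙ) ^ m j) := by
        rw [prod_congr rfl fun j _ => hmoment j, prod_mul_distrib, mul_left_comm,
          multinomial_two_mul_mul_prod_gaussianEvenMoment]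
        ring
    _ ≤ _ := mul_le_mul_of_nonneg_left (multinomial_mul_prod_le_coeff_covPoly_pow hcov m)
        (gaussianEvenMoment_nonneg _)
    _ = _ := hcoeff

theorem stmt_3 {Ω : Type*} [MeasureSpace Ω] [IsProbabilityMeasure (ℙ : Measure Ω)]
    {n : ℕ} (X : Fin n → Ω → ℝ) (hX : IsCenteredGaussianVec X)
    (hcov : ∀ i j, i ≠ j → 0 ≤ ∫ ω, X i ω * X j ω ∂ℙ)
    (m : Fin n → ℕ) (hm : ∀ j, 1 ≤ m j) :
    (∏ j, ∫ ω, X j ω ^ (2 * m j) ∂ℙ) ≤ ∫ ω, ∏ j, X j ω ^ (2 * m j) ∂ℙ :=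
  stmt_3_general X hX hcov m
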